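/- arXiv:1203.1522 — 6 statements merged into one kernel-verified Lean document; each statement's English description precedes it below -/
import Mathlib

section
/- Let A, B, C, D be n×n matrices over the tropical semiring such that B = C ⊗ A and A = D ⊗ B (tropical matrix products). If B has full row rank, then there exists a monomial tropical n×n matrix P such that B = P ⊗ A. -/
/-- The tropical (max-plus) semiring carrier: `ℝ ∪ {-∞}`, with `⊥` playing the
role of `-∞`.  Tropical addition is `⊔` (max) and tropical multiplication is
`+` (with `⊥ + x = x + ⊥ = ⊥`). -/
abbrev Trop : Type := WithBot ℝ

/-- Tropical matrix multiplication: `(A ⊗ B) i j = max_k (A i k + B k j)`. -/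
def tropMulMat {n m p : ℕ} (A : Matrix (Fin n) (Fin m) Trop)
    (B : Matrix (Fin m) (Fin p) Trop) : Matrix (Fin n) (Fin p) Trop :=
  fun i j => Finset.univ.sup fun k => A i k + B k j

/-- A tropical matrix has full row rank if no row is a tropical linear
combination of the other rows. -/
def FullRowRank {n m : ℕ} (B : Matrix (Fin n) (Fin m) Trop) : Prop :=
  ¬ ∃ (i : Fin n) (lam : Fin n → Trop),
      ∀ t, B i t = (Finset.univ.erase i).sup fun k => lam k + B k t

/-- A tropical square matrix is monomial if there is a permutation `σ` with
`P i j ≠ -∞ ↔ i = σ j`. -/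
def IsMonomial {n : ℕ} (P : Matrix (Fin n) (Fin n) Trop) : Prop :=
  ∃ σ : Equiv.Perm (Fin n), ∀ i j, P i j ≠ ⊥ ↔ i = σ j

/-!
Put `E = C ⊗ D`, so that `E ⊗ B = C ⊗ A = B`. Full row rank of `B` forces `E` to look like the
identity: `E i i ≥ 0`, since otherwise row `i` of `B` would be the combination
`⊕_{k ≠ i} E i k ⊗ (row k)` of the other rows, and `E i j + E j i < 0` for `i ≠ j`, since otherwise
row `i` would equal `E i j ⊗ (row j)`. Picking for each `i` an index `k i` with
`C i (k i) + D (k i) i ≥ 0` thus gives an injective `k`, and the monomial matrix `P` with entry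
`C i (k i)` at `(i, k i)` satisfies `P ⊗ A ≤ C ⊗ A = B` and
`B i t ≤ C i (k i) + D (k i) i + B i t ≤ C i (k i) + A (k i) t = (P ⊗ A) i t`.
-/

lemma Trop.add_finset_sup {ι : Type*} (s : Finset ι) (f : ι → Trop) (a : Trop) :
    a + s.sup f = s.sup fun x => a + f x :=
  Finset.apply_sup_eq_sup_comp_of_linearOrder (a + ·) (fun _ _ h => add_le_add_right h a)
    (WithBot.add_bot a)

lemma Trop.finset_sup_add {ι : Type*} (s : Finset ι) (f : ι → Trop) (a : Trop) :
    s.sup f + a = s.sup fun x => f x + a :=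
  Finset.apply_sup_eq_sup_comp_of_linearOrder (· + a) (fun _ _ h => add_le_add_left h a)
    (WithBot.bot_add a)

section TropMulMat

variable {n m p q : ℕ}

lemma tropMulMat_assoc (X : Matrix (Fin n) (Fin m) Trop) (Y : Matrix (Fin m) (Fin p) Trop)
    (Z : Matrix (Fin p) (Fin q) Trop) :
    tropMulMat (tropMulMat X Y) Z = tropMulMat X (tropMulMat Y Z) := by
  funext i t
  simp only [tropMulMat, Trop.finset_sup_add, Trop.add_finset_sup, add_assoc]
  exact Finset.sup_comm _ _ _

lemma add_le_tropMulMat (X : Matrix (Fin n) (Fin m) Trop) (Y : Matrix (Fin m) (Fin p) Trop)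
    (i : Fin n) (k : Fin m) (j : Fin p) : X i k + Y k j ≤ tropMulMat X Y i j :=
  Finset.le_sup (f := fun k => X i k + Y k j) (Finset.mem_univ k)

lemma add_le_of_tropMulMat_eq {E : Matrix (Fin n) (Fin n) Trop} {B : Matrix (Fin n) (Fin m) Trop}
    (hEB : tropMulMat E B = B) (i k : Fin n) (t : Fin m) : E i k + B k t ≤ B i t := by
  conv_rhs => rw [← hEB]
  exact add_le_tropMulMat E B i k t

end TropMulMat

namespace FullRowRank

variable {n m : ℕ} {B : Matrix (Fin n) (Fin m) Trop}

lemma exists_ne_sup_erase (hB : FullRowRank B) (i : Fin n) (lam : Fin n → Trop) :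
    ∃ t, B i t ≠ (Finset.univ.erase i).sup fun k => lam k + B k t := by
  by_contra! h
  exact hB ⟨i, lam, h⟩

lemma exists_ne_add_row (hB : FullRowRank B) {i j : Fin n} (hij : i ≠ j) (c : Trop) :
    ∃ t, B i t ≠ c + B j t := by
  classical
  obtain ⟨t, ht⟩ := hB.exists_ne_sup_erase i (fun k => if k = j then c else ⊥)
  have hsup : ((Finset.univ.erase i).sup fun k => (if k = j then c else ⊥) + B k t) = c + B j t := by
    refine le_antisymm (Finset.sup_le fun k _ => ?_) ?_
    · by_cases hk : k = j <;> simp [hk]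
    · exact Finset.le_sup_of_le (Finset.mem_erase.mpr ⟨hij.symm, Finset.mem_univ j⟩) (by simp)
  exact ⟨t, hsup ▸ ht⟩

variable {E : Matrix (Fin n) (Fin n) Trop}

lemma diag_nonneg_of_tropMulMat_eq (hB : FullRowRank B) (hEB : tropMulMat E B = B)
    (i : Fin n) : 0 ≤ E i i := by
  classical
  obtain ⟨t, ht⟩ := hB.exists_ne_sup_erase i (E i)
  set S := (Finset.univ.erase i).sup fun k => E i k + B k t
  have hS : S < B i t :=
    (Finset.sup_le fun k _ => add_le_of_tropMulMat_eq hEB i k t).lt_of_ne ht.symm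
  have hsplit : B i t = (E i i + B i t) ⊔ S := by
    conv_lhs => rw [← hEB]
    rw [tropMulMat, ← Finset.insert_erase (Finset.mem_univ i), Finset.sup_insert]
  have hle : 0 + B i t ≤ E i i + B i t := by
    rw [zero_add]
    exact (le_sup_iff.mp hsplit.le).resolve_right hS.not_ge
  exact (WithBot.add_le_add_iff_right hS.ne_bot).mp hle

lemma add_neg_of_tropMulMat_eq (hB : FullRowRank B) (hEB : tropMulMat E B = B)
    {i j : Fin n} (hij : i ≠ j) : E i j + E j i < 0 := by
  by_contra! hge
  obtain ⟨t, ht⟩ := hB.exists_ne_add_row hij (E i j)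
  have hle := add_le_of_tropMulMat_eq hEB
  refine ht (le_antisymm ?_ (hle i j t))
  calc B i t = 0 + B i t := (zero_add _).symm
    _ ≤ E i j + E j i + B i t := add_le_add_left hge _
    _ = E i j + (E j i + B i t) := add_assoc _ _ _
    _ ≤ E i j + B j t := add_le_add_right (hle j i t) _

end FullRowRank

lemma exists_injective_add_nonneg_of_tropMulMat {n l : ℕ} {C : Matrix (Fin n) (Fin l) Trop}
    {D : Matrix (Fin l) (Fin n) Trop} (hdiag : ∀ i, 0 ≤ tropMulMat C D i i)
    (hoff : ∀ i j, i ≠ j → tropMulMat C D i j + tropMulMat C D j i < 0) :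
    ∃ k : Fin n → Fin l, Function.Injective k ∧ ∀ i, 0 ≤ C i (k i) + D (k i) i := by
  have hex : ∀ i, ∃ m, 0 ≤ C i m + D m i := fun i => by
    obtain ⟨m, -, hm⟩ := (Finset.le_sup_iff (WithBot.bot_lt_coe 0)).mp (hdiag i)
    exact ⟨m, hm⟩
  choose k hk using hex
  refine ⟨k, fun i j hkij => ?_, hk⟩
  by_contra hij
  refine (hoff i j hij).not_ge ?_
  calc (0 : Trop) ≤ (C i (k i) + D (k i) i) + (C j (k j) + D (k j) j) := add_nonneg (hk i) (hk j)
    _ = (C i (k i) + D (k i) j) + (C j (k j) + D (k j) i) := by rw [hkij]; abel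
    _ ≤ tropMulMat C D i j + tropMulMat C D j i :=
      add_le_add (add_le_tropMulMat C D i (k i) j) (add_le_tropMulMat C D j (k j) i)

def tropMonomial {n : ℕ} (k : Fin n → Fin n) (c : Fin n → Trop) : Matrix (Fin n) (Fin n) Trop :=
  fun i j => if j = k i then c i else ⊥

lemma isMonomial_tropMonomial {n : ℕ} {k : Fin n → Fin n} {c : Fin n → Trop}
    (hk : Function.Injective k) (hc : ∀ i, c i ≠ ⊥) : IsMonomial (tropMonomial k c) := by
  refine ⟨(Equiv.ofBijective k hk.bijective_of_finite).symm, fun i j => ?_⟩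
  rw [Equiv.eq_symm_apply, Equiv.ofBijective_apply, eq_comm]
  by_cases hj : j = k i <;> simp [tropMonomial, hj, hc]

lemma tropMulMat_tropMonomial_apply {n p : ℕ} (k : Fin n → Fin n) (c : Fin n → Trop)
    (A : Matrix (Fin n) (Fin p) Trop) (i : Fin n) (t : Fin p) :
    tropMulMat (tropMonomial k c) A i t = c i + A (k i) t := by
  refine le_antisymm (Finset.sup_le fun j _ => ?_) ?_
  · by_cases hj : j = k i <;> simp [tropMonomial, hj]
  · simpa [tropMonomial] using add_le_tropMulMat (tropMonomial k c) A i (k i) t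

theorem monomial_factorization {n : ℕ} (A B C D : Matrix (Fin n) (Fin n) Trop)
    (hB : B = tropMulMat C A) (hA : A = tropMulMat D B)
    (hfull : FullRowRank B) :
    ∃ P : Matrix (Fin n) (Fin n) Trop, IsMonomial P ∧ B = tropMulMat P A := by
  have hEB : tropMulMat (tropMulMat C D) B = B := by rw [tropMulMat_assoc, ← hA, ← hB]
  obtain ⟨k, hk_inj, hk⟩ := exists_injective_add_nonneg_of_tropMulMat
    (hfull.diag_nonneg_of_tropMulMat_eq hEB) fun i j hij => hfull.add_neg_of_tropMulMat_eq hEB hij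
  have hC : ∀ i, C i (k i) ≠ ⊥ := fun i h => by simpa [h] using hk i
  refine ⟨tropMonomial k fun i => C i (k i), isMonomial_tropMonomial hk_inj hC, ?_⟩
  funext i t
  rw [tropMulMat_tropMonomial_apply]
  refine le_antisymm ?_ (hB ▸ add_le_tropMulMat C A i (k i) t)
  calc B i t = 0 + B i t := (zero_add _).symm
    _ ≤ C i (k i) + D (k i) i + B i t := add_le_add_left (hk i) _
    _ = C i (k i) + (D (k i) i + B i t) := add_assoc _ _ _
    _ ≤ C i (k i) + A (k i) t := add_le_add_right (hA ▸ add_le_tropMulMat D B (k i) i t) _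
end

section
/- Let M and B be n×n matrices over the tropical semiring with B = M ⊗ B (tropical matrix product). If B has full row rank, then every diagonal entry of M satisfies m_{ii} ≥ 0 (in particular m_{ii} ≠ -∞) for all i ∈ {1,…,n}. -/
theorem diag_nonneg_of_fixed {n : ℕ} (M B : Matrix (Fin n) (Fin n) Trop)
    (hB : B = tropMulMat M B) (hfull : FullRowRank B) :
    ∀ i : Fin n, (0 : Trop) ≤ M i i ∧ M i i ≠ ⊥ := by
  intro i
  suffices h : (0 : Trop) ≤ M i i by
    exact ⟨h, fun hb => by simp [hb] at h⟩
  by_contra hneg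
  push_neg at hneg
  apply hfull
  refine ⟨i, fun k => M i k, fun t => ?_⟩
  have hsplit : B i t = (M i i + B i t) ⊔ ((Finset.univ.erase i).sup fun k => M i k + B k t) := by
    conv_lhs => rw [hB]
    show Finset.univ.sup (fun k => M i k + B k t) = _
    conv_lhs => rw [← Finset.insert_erase (Finset.mem_univ i), Finset.sup_insert]
  set S := (Finset.univ.erase i).sup fun k => M i k + B k t with hS
  rcases eq_or_ne (B i t) ⊥ with hb | hb
  · refine le_antisymm ?_ ?_
    · rw [hb]; exact bot_le
    · rw [hb]; calc S ≤ (M i i + B i t) ⊔ S := le_sup_right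
        _ = ⊥ := by rw [← hsplit, hb]
  · have hlt : M i i + B i t < B i t := by
      calc M i i + B i t < 0 + B i t := WithBot.add_lt_add_right hb hneg
        _ = B i t := by rw [zero_add]
    rcases le_total (M i i + B i t) S with hc | hc
    · rw [hsplit, sup_eq_right.mpr hc]
    · exfalso
      have h2 : B i t = M i i + B i t := hsplit.trans (sup_eq_left.mpr hc)
      exact lt_irrefl (B i t) (lt_of_le_of_lt h2.le hlt)
end

section
/- Let n ≥ 2 and let 𝒢 be a subgroup of the multiplicative semigroup of n×n matrices over the tropical semiring (i.e., a subset closed under tropical matrix multiplication that forms a group under this operation). If the row rank of some matrix A ∈ 𝒢 is not full, then 𝒢 admits a faithful representation by tropical (n−1)×(n−1) matrices, i.e., there exists an injective map φ from 𝒢 into 𝕋^{(n−1)×(n−1)} satisfying φ(G ⊗ H) = φ(G) ⊗ φ(H) for all G, H ∈ 𝒢. -/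
/-- A subset of the semigroup of tropical `n×n` matrices which is closed under
tropical matrix multiplication and forms a group under it (its neutral element
need not be the neutral element of the whole semigroup). -/
def IsMatSubgroup {n : ℕ} (S : Set (Matrix (Fin n) (Fin n) Trop)) : Prop :=
  (∀ A ∈ S, ∀ B ∈ S, tropMulMat A B ∈ S) ∧
  ∃ E ∈ S, (∀ A ∈ S, tropMulMat E A = A ∧ tropMulMat A E = A) ∧
    ∀ A ∈ S, ∃ B ∈ S, tropMulMat A B = E ∧ tropMulMat B A = E

/-!
If row `i` of `A` is the combination `⊕_{k ≠ i} λ_k ⊗ A_k` of the other rows, then so is row `i`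
of every `A ⊗ N`; in particular of the neutral element `E = A ⊗ A⁻¹`, hence of every `G = E ⊗ G`.
Writing `R` for the `(n-1) × n` matrix deleting row `i` and `C` for the `n × (n-1)` matrix
re-creating it from the others via `λ`, this says `C ⊗ R ⊗ G = G` on the group, so
`G ↦ R ⊗ G ⊗ C` is multiplicative there; it is injective because `G = C ⊗ (R ⊗ G ⊗ C) ⊗ (R ⊗ E)`.
-/

open Finset

lemma Finset.sup_eq_single_of_mem {α β : Type*} [SemilatticeSup α] [OrderBot α] {s : Finset β}
    {f : β → α} {b : β} (hb : b ∈ s) (h : ∀ c ∈ s, c ≠ b → f c = ⊥) : s.sup f = f b := by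
  refine le_antisymm (Finset.sup_le fun c hc => ?_) (le_sup hb)
  by_cases hcb : c = b
  · rw [hcb]
  · simp [h c hc hcb]

lemma Fin.sup_erase_eq_sup_succAbove {α : Type*} [SemilatticeSup α] [OrderBot α] {m : ℕ}
    (i : Fin (m + 1)) (f : Fin (m + 1) → α) :
    (univ.erase i).sup f = univ.sup fun k => f (i.succAbove k) := by
  rw [← compl_singleton, ← Fin.image_succAbove_univ, sup_image]
  rfl

lemma trop_add_sup {ι : Type*} (s : Finset ι) (c : Trop) (f : ι → Trop) :
    c + s.sup f = s.sup fun k => c + f k :=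
  apply_sup_eq_sup_comp_of_linearOrder (c + ·) (fun _ _ h => add_le_add_right h c)
    (WithBot.add_bot c)

lemma trop_sup_add {ι : Type*} (s : Finset ι) (f : ι → Trop) (c : Trop) :
    s.sup f + c = s.sup fun k => f k + c := by
  simp only [add_comm _ c, trop_add_sup]

lemma tropMulMat_assoc_s3 {a b c d : ℕ} (A : Matrix (Fin a) (Fin b) Trop)
    (B : Matrix (Fin b) (Fin c) Trop) (C : Matrix (Fin c) (Fin d) Trop) :
    tropMulMat (tropMulMat A B) C = tropMulMat A (tropMulMat B C) := by
  funext i j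
  simp only [tropMulMat, trop_sup_add, trop_add_sup, add_assoc]
  exact Finset.sup_comm _ _ _

def IsRowCombination {n p : ℕ} (B : Matrix (Fin n) (Fin p) Trop) (i : Fin n)
    (lam : Fin n → Trop) : Prop :=
  ∀ t, B i t = (univ.erase i).sup fun k => lam k + B k t

def rowDeletion {m : ℕ} (i : Fin (m + 1)) : Matrix (Fin m) (Fin (m + 1)) Trop :=
  fun k b => if b = i.succAbove k then 0 else ⊥

def rowReinsertion {m : ℕ} (i : Fin (m + 1)) (lam : Fin (m + 1) → Trop) :
    Matrix (Fin (m + 1)) (Fin m) Trop :=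
  fun b k => if b = i then lam (i.succAbove k) else if b = i.succAbove k then 0 else ⊥

section RowDeletion

variable {m p : ℕ} (i : Fin (m + 1))

lemma rowDeletion_mul_apply (G : Matrix (Fin (m + 1)) (Fin p) Trop) (k : Fin m) (t : Fin p) :
    tropMulMat (rowDeletion i) G k t = G (i.succAbove k) t := by
  refine (sup_eq_single_of_mem (mem_univ (i.succAbove k)) fun b _ hb => ?_).trans ?_
  · simp [rowDeletion, hb]
  · simp [rowDeletion]

lemma rowReinsertion_mul_apply_self (lam : Fin (m + 1) → Trop)
    (N : Matrix (Fin m) (Fin p) Trop) (t : Fin p) :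
    tropMulMat (rowReinsertion i lam) N i t = univ.sup fun k => lam (i.succAbove k) + N k t := by
  simp [tropMulMat, rowReinsertion]

lemma rowReinsertion_mul_apply_succAbove (lam : Fin (m + 1) → Trop)
    (N : Matrix (Fin m) (Fin p) Trop) (k : Fin m) (t : Fin p) :
    tropMulMat (rowReinsertion i lam) N (i.succAbove k) t = N k t := by
  refine (sup_eq_single_of_mem (mem_univ k) fun l _ hl => ?_).trans ?_
  · simp [rowReinsertion, Fin.succAbove_ne, Ne.symm hl]
  · simp [rowReinsertion, Fin.succAbove_ne]

lemma rowReinsertion_mul_rowDeletion_mul {lam : Fin (m + 1) → Trop}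
    {G : Matrix (Fin (m + 1)) (Fin p) Trop} (hG : IsRowCombination G i lam) :
    tropMulMat (rowReinsertion i lam) (tropMulMat (rowDeletion i) G) = G := by
  funext a t
  rcases Fin.eq_self_or_eq_succAbove i a with rfl | ⟨k, rfl⟩
  · simp only [rowReinsertion_mul_apply_self, rowDeletion_mul_apply, hG t,
      Fin.sup_erase_eq_sup_succAbove]
  · rw [rowReinsertion_mul_apply_succAbove, rowDeletion_mul_apply]

end RowDeletion

def sandwich {m n : ℕ} (R : Matrix (Fin m) (Fin n) Trop) (C : Matrix (Fin n) (Fin m) Trop)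
    (G : Matrix (Fin n) (Fin n) Trop) : Matrix (Fin m) (Fin m) Trop :=
  tropMulMat (tropMulMat R G) C

section Sandwich

variable {m n : ℕ} {R : Matrix (Fin m) (Fin n) Trop} {C : Matrix (Fin n) (Fin m) Trop}

lemma tropMulMat_fixed_of_fixed {M : Matrix (Fin n) (Fin n) Trop}
    (hM : tropMulMat C (tropMulMat R M) = M) (N : Matrix (Fin n) (Fin n) Trop) :
    tropMulMat C (tropMulMat R (tropMulMat M N)) = tropMulMat M N := by
  rw [← tropMulMat_assoc_s3 R, ← tropMulMat_assoc_s3 C, hM]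

lemma sandwich_mul {H : Matrix (Fin n) (Fin n) Trop} (hH : tropMulMat C (tropMulMat R H) = H)
    (G : Matrix (Fin n) (Fin n) Trop) :
    sandwich R C (tropMulMat G H) = tropMulMat (sandwich R C G) (sandwich R C H) := by
  conv_lhs => rw [← hH]
  simp only [sandwich, tropMulMat_assoc_s3]

lemma mul_sandwich_mul {G E : Matrix (Fin n) (Fin n) Trop}
    (hG : tropMulMat C (tropMulMat R G) = G) (hE : tropMulMat C (tropMulMat R E) = E)
    (hGE : tropMulMat G E = G) :
    tropMulMat (tropMulMat C (sandwich R C G)) (tropMulMat R E) = G := by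
  rw [sandwich, ← tropMulMat_assoc_s3 C, hG, tropMulMat_assoc_s3, hE, hGE]

variable {S : Set (Matrix (Fin n) (Fin n) Trop)}

lemma IsMatSubgroup.fixed_of_fixed (hS : IsMatSubgroup S) {A : Matrix (Fin n) (Fin n) Trop}
    (hA : A ∈ S) (hCR : tropMulMat C (tropMulMat R A) = A) :
    ∀ G ∈ S, tropMulMat C (tropMulMat R G) = G := by
  obtain ⟨-, E, -, hid, hinv⟩ := hS
  obtain ⟨B, -, hAB, -⟩ := hinv A hA
  have hE : tropMulMat C (tropMulMat R E) = E := hAB ▸ tropMulMat_fixed_of_fixed hCR B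
  intro G hG
  rw [← (hid G hG).1]
  exact tropMulMat_fixed_of_fixed hE G

lemma IsMatSubgroup.injOn_sandwich (hS : IsMatSubgroup S)
    (hCR : ∀ G ∈ S, tropMulMat C (tropMulMat R G) = G) : Set.InjOn (sandwich R C) S := by
  obtain ⟨-, E, hE, hid, -⟩ := hS
  intro G hG H hH hGH
  rw [← mul_sandwich_mul (hCR G hG) (hCR E hE) (hid G hG).2, hGH,
    mul_sandwich_mul (hCR H hH) (hCR E hE) (hid H hH).2]

end Sandwich

theorem faithful_rep_smaller_of_not_fullRowRank_general {n : ℕ}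
    (S : Set (Matrix (Fin n) (Fin n) Trop)) (hS : IsMatSubgroup S)
    (A : Matrix (Fin n) (Fin n) Trop) (hA : A ∈ S) (hfull : ¬ FullRowRank A) :
    ∃ φ : Matrix (Fin n) (Fin n) Trop → Matrix (Fin (n - 1)) (Fin (n - 1)) Trop,
      Set.InjOn φ S ∧
      ∀ G ∈ S, ∀ H ∈ S, φ (tropMulMat G H) = tropMulMat (φ G) (φ H) := by
  obtain ⟨i, lam, hrow⟩ := not_not.mp hfull
  obtain ⟨m, rfl⟩ : ∃ m, n = m + 1 := Nat.exists_eq_add_one_of_ne_zero i.pos.ne'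
  have hfix := hS.fixed_of_fixed hA (rowReinsertion_mul_rowDeletion_mul i hrow)
  exact ⟨sandwich (rowDeletion i) (rowReinsertion i lam), hS.injOn_sandwich hfix,
    fun G _ H hH => sandwich_mul (hfix H hH) G⟩

theorem faithful_rep_smaller_of_not_fullRowRank {n : ℕ} (hn : 2 ≤ n)
    (S : Set (Matrix (Fin n) (Fin n) Trop)) (hS : IsMatSubgroup S)
    (A : Matrix (Fin n) (Fin n) Trop) (hA : A ∈ S) (hfull : ¬ FullRowRank A) :
    ∃ φ : Matrix (Fin n) (Fin n) Trop → Matrix (Fin (n - 1)) (Fin (n - 1)) Trop,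
      Set.InjOn φ S ∧
      ∀ G ∈ S, ∀ H ∈ S, φ (tropMulMat G H) = tropMulMat (φ G) (φ H) :=
  faithful_rep_smaller_of_not_fullRowRank_general S hS A hA hfull
end

section
/- Let 𝒢 be a group that admits a faithful representation by n×n tropical matrices, i.e., there exists an injective group-multiplication-preserving map from 𝒢 into the multiplicative semigroup (𝕋^{n×n}, ⊗). Then 𝒢 has a torsion-free abelian subgroup of index at most n!. -/
/-!
Write `E = φ 1`, an idempotent tropical matrix, and call `i` critical when `E i i = 0`. Following an
optimal path until an index repeats shows that every finite entry of `E`, hence of every `φ g`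
(as `E ⊗ φ g = φ g = φ g ⊗ E`), is the weight of a path through critical indices; so `φ g` is
determined by its critical block. Each `g` permutes the classes of critical indices
(`i ~ j` iff `E i j + E j i = 0`), matching `i` with `k` when `φ g i k + φ g⁻¹ k i = 0`, and the
kernel `H` of this action on at most `n` classes has index at most `n!`. On `H` the critical
diagonal entries `g ↦ φ g i i` are finite and additive, and by the rigidity above they determine
`g`, so `H` embeds into the torsion-free abelian group `ℝ^crit`.
-/

section TropicalArithmetic

lemma Trop.le_zero_of_add_self_le {a : Trop} (h : a + a ≤ a) : a ≤ 0 := by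
  rcases eq_or_ne a ⊥ with rfl | ha
  · exact bot_le
  · exact (WithBot.add_le_add_iff_left ha).1 (by rwa [add_zero])

lemma Trop.eq_of_le_of_add_eq_zero {x y x' y' : Trop} (hy : x ≤ y) (hy' : x' ≤ y')
    (hx : x + x' = 0) (hsum : y + y' ≤ 0) : y = x := by
  have hx' : x' ≠ ⊥ := (WithBot.add_ne_bot.1 (show x + x' ≠ ⊥ by simp [hx])).2
  refine le_antisymm ((WithBot.add_le_add_iff_right hx').1 ?_) hy
  calc y + x' ≤ y + y' := add_le_add_right hy' y
    _ ≤ 0 := hsum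
    _ = x + x' := hx.symm

lemma Trop.unbotD_add {a b : Trop} (ha : a ≠ ⊥) (hb : b ≠ ⊥) :
    (a + b).unbotD 0 = a.unbotD 0 + b.unbotD 0 := by
  lift a to ℝ using ha
  lift b to ℝ using hb
  rfl

end TropicalArithmetic

section TropicalMatrix

variable {n m p : ℕ} {A : Matrix (Fin n) (Fin m) Trop} {B : Matrix (Fin m) (Fin p) Trop}
  {C : Matrix (Fin n) (Fin p) Trop}

lemma add_le_of_tropMulMat_eq_s6 (h : tropMulMat A B = C) (i : Fin n) (k : Fin m) (j : Fin p) :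
    A i k + B k j ≤ C i j :=
  h ▸ Finset.le_sup (f := fun k => A i k + B k j) (Finset.mem_univ k)

lemma exists_add_eq_of_tropMulMat_eq (h : tropMulMat A B = C) {i : Fin n} {j : Fin p}
    (hC : C i j ≠ ⊥) : ∃ k, C i j = A i k + B k j := by
  subst h
  have hne : (Finset.univ : Finset (Fin m)).Nonempty :=
    Finset.nonempty_iff_ne_empty.2 fun he => hC (by simp [tropMulMat, he])
  obtain ⟨k, -, hk⟩ := Finset.exists_mem_eq_sup Finset.univ hne fun k => A i k + B k j
  exact ⟨k, hk⟩

end TropicalMatrix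

section Idempotent

variable {n : ℕ} {E M N : Matrix (Fin n) (Fin n) Trop}

lemma diag_nonpos_of_idempotent (hE : tropMulMat E E = E) (k : Fin n) : E k k ≤ 0 :=
  Trop.le_zero_of_add_self_le (add_le_of_tropMulMat_eq_s6 hE k k k)

/-- An optimal path from `p` to `q` is extended step by step until an index repeats; the cycle so
found has weight `0`. -/
theorem exists_critical_factor (hE : tropMulMat E E = E) {p q : Fin n} (hpq : E p q ≠ ⊥) :
    ∃ k, E k k = 0 ∧ E p q = E p k + E k q := by
  have : Nonempty (Fin n) := ⟨p⟩
  have step : ∀ k, E p q = E p k + E k q →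
      ∃ k', E p q = E p k' + E k' q ∧ E p k' = E p k + E k k' := by
    intro k hk
    have hkq : E k q ≠ ⊥ := (WithBot.add_ne_bot.1 (hk ▸ hpq)).2
    obtain ⟨k', hk'⟩ := exists_add_eq_of_tropMulMat_eq hE hkq
    have hk'q : E k' q ≠ ⊥ := (WithBot.add_ne_bot.1 (hk' ▸ hkq)).2
    have hpath : E p q = E p k + E k k' + E k' q := by rw [hk, hk', add_assoc]
    have hge : E p k' ≤ E p k + E k k' :=
      (WithBot.add_le_add_iff_right hk'q).1 (hpath ▸ add_le_of_tropMulMat_eq_s6 hE p k' q)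
    have heq := le_antisymm hge (add_le_of_tropMulMat_eq_s6 hE p k k')
    exact ⟨k', by rw [hpath, heq], heq⟩
  choose! next hnext hnext_eq using step
  have hfactor : ∀ m k, E p q = E p k + E k q →
      E p q = E p (next^[m] k) + E (next^[m] k) q := by
    intro m
    induction m with
    | zero => exact fun _ hk => hk
    | succ m ih =>
      exact fun k hk => by rw [Function.iterate_succ_apply']; exact hnext _ (ih k hk)
  have hchain : ∀ m k, E p q = E p k + E k q →
      E p (next^[m + 1] k) ≤ E p k + E k (next^[m + 1] k) := by
    intro m
    induction m with
    | zero => exact fun k hk => (hnext_eq k hk).le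
    | succ m ih =>
      intro k hk
      set j := next^[m + 1] k
      rw [Function.iterate_succ_apply', hnext_eq j (hfactor _ k hk)]
      calc E p j + E j (next j) ≤ E p k + E k j + E j (next j) := add_le_add_left (ih k hk) _
        _ ≤ E p k + E k (next j) := by
          rw [add_assoc]; exact add_le_add_right (add_le_of_tropMulMat_eq_s6 hE k j (next j)) _
  obtain ⟨k₀, hk₀⟩ := exists_add_eq_of_tropMulMat_eq hE hpq
  obtain ⟨a, b, hab, hper⟩ := Set.finite_univ.exists_lt_map_eq_of_forall_mem
    (f := fun m => next^[m] k₀) fun _ => Set.mem_univ _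
  obtain ⟨d, rfl⟩ := Nat.exists_eq_add_of_lt hab
  set k := next^[a] k₀
  have hk : E p q = E p k + E k q := hfactor a k₀ hk₀
  have hcycle : next^[d + 1] k = k := by
    rw [← Function.iterate_add_apply, hper, show d + 1 + a = a + d + 1 by omega]
  have hpk : E p k + 0 ≤ E p k + E k k := by
    simpa only [hcycle, add_zero] using hchain d k hk
  exact ⟨k, le_antisymm (diag_nonpos_of_idempotent hE k)
    ((WithBot.add_le_add_iff_left (WithBot.add_ne_bot.1 (hk ▸ hpq)).1).1 hpk), hk⟩

lemma exists_critical_factor_left (hE : tropMulMat E E = E) (hM : tropMulMat E M = M)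
    {p q : Fin n} (hpq : M p q ≠ ⊥) : ∃ k, E k k = 0 ∧ M p q = E p k + M k q := by
  obtain ⟨k₀, hk₀⟩ := exists_add_eq_of_tropMulMat_eq hM hpq
  obtain ⟨k, hkk, hk⟩ := exists_critical_factor hE (WithBot.add_ne_bot.1 (hk₀ ▸ hpq)).1
  refine ⟨k, hkk, le_antisymm ?_ (add_le_of_tropMulMat_eq_s6 hM p k q)⟩
  rw [hk₀, hk, add_assoc]
  exact add_le_add_right (add_le_of_tropMulMat_eq_s6 hM k k₀ q) _

lemma exists_critical_factor_right (hE : tropMulMat E E = E) (hM : tropMulMat M E = M)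
    {p q : Fin n} (hpq : M p q ≠ ⊥) : ∃ l, E l l = 0 ∧ M p q = M p l + E l q := by
  obtain ⟨l₀, hl₀⟩ := exists_add_eq_of_tropMulMat_eq hM hpq
  obtain ⟨l, hll, hl⟩ := exists_critical_factor hE (WithBot.add_ne_bot.1 (hl₀ ▸ hpq)).2
  refine ⟨l, hll, le_antisymm ?_ (add_le_of_tropMulMat_eq_s6 hM p l q)⟩
  rw [hl₀, hl, ← add_assoc]
  exact add_le_add_left (add_le_of_tropMulMat_eq_s6 hM p l₀ l) _

lemma le_of_le_on_critical (hE : tropMulMat E E = E) (hM : tropMulMat E M = M)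
    (hM' : tropMulMat M E = M) (hN : tropMulMat E N = N) (hN' : tropMulMat N E = N)
    (h : ∀ k l, E k k = 0 → E l l = 0 → M k l ≤ N k l) (p q : Fin n) : M p q ≤ N p q := by
  rcases eq_or_ne (M p q) ⊥ with hpq | hpq
  · rw [hpq]; exact bot_le
  obtain ⟨k, hkk, hk⟩ := exists_critical_factor_left hE hM hpq
  obtain ⟨l, hll, hl⟩ := exists_critical_factor_right hE hM' (WithBot.add_ne_bot.1 (hk ▸ hpq)).2
  calc M p q = E p k + (M k l + E l q) := by rw [hk, hl]
    _ ≤ E p k + (N k l + E l q) := add_le_add_right (add_le_add_left (h k l hkk hll) _) _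
    _ ≤ E p k + N k q := add_le_add_right (add_le_of_tropMulMat_eq_s6 hN' k l q) _
    _ ≤ N p q := add_le_of_tropMulMat_eq_s6 hN p k q

theorem eq_of_eq_on_critical (hE : tropMulMat E E = E) (hM : tropMulMat E M = M)
    (hM' : tropMulMat M E = M) (hN : tropMulMat E N = N) (hN' : tropMulMat N E = N)
    (h : ∀ k l, E k k = 0 → E l l = 0 → M k l = N k l) : M = N :=
  Matrix.ext fun p q => le_antisymm
    (le_of_le_on_critical hE hM hM' hN hN' (fun k l hk hl => (h k l hk hl).le) p q)
    (le_of_le_on_critical hE hN hN' hM hM' (fun k l hk hl => (h k l hk hl).ge) p q)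

end Idempotent

theorem MulAction.index_ker_toPermHom_le (G α : Type*) [Group G] [MulAction G α] [Finite α] :
    (MulAction.toPermHom G α).ker.index ≤ (Nat.card α).factorial := by
  rw [Subgroup.index_ker, ← Nat.card_perm]
  exact Subgroup.card_le_card_group _

theorem MulAction.index_ker_toPermHom_pos (G α : Type*) [Group G] [MulAction G α] [Finite α] :
    0 < (MulAction.toPermHom G α).ker.index := by
  rw [Subgroup.index_ker]
  exact Nat.card_pos

def IsTropicalRep {G : Type*} [Mul G] {n : ℕ} (φ : G → Matrix (Fin n) (Fin n) Trop) : Prop :=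
  ∀ g h, φ (g * h) = tropMulMat (φ g) (φ h)

section Representation

variable {G : Type*} [Group G] {n : ℕ} {φ : G → Matrix (Fin n) (Fin n) Trop}

/-- `g` carries the index `i` to `k`: the cycle `i → k → i` through `φ g` and `φ g⁻¹` attains the
largest possible weight `0` (`IsTropicalRep.transports_le`). -/
def Transports (φ : G → Matrix (Fin n) (Fin n) Trop) (g : G) (i k : Fin n) : Prop :=
  φ g i k + φ g⁻¹ k i = 0

lemma Transports.inv {g : G} {i k : Fin n} (h : Transports φ g i k) : Transports φ g⁻¹ k i := by
  rwa [Transports, inv_inv, add_comm]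

lemma Transports.diag_ne_bot {g : G} {i : Fin n} (hg : Transports φ g i i) : φ g i i ≠ ⊥ :=
  (WithBot.add_ne_bot.1 (show φ g i i + φ g⁻¹ i i ≠ ⊥ by rw [hg]; simp)).1

abbrev CriticalIndex (φ : G → Matrix (Fin n) (Fin n) Trop) : Type := {i : Fin n // φ 1 i i = 0}

lemma transports_one_self (i : CriticalIndex φ) : Transports φ 1 i i := by
  simp [Transports, i.2]

namespace IsTropicalRep

lemma add_le (hφ : IsTropicalRep φ) (g h : G) (i k j : Fin n) :
    φ g i k + φ h k j ≤ φ (g * h) i j :=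
  add_le_of_tropMulMat_eq_s6 (hφ g h).symm i k j

lemma tropMulMat_one_left (hφ : IsTropicalRep φ) (g : G) : tropMulMat (φ 1) (φ g) = φ g := by
  rw [← hφ, one_mul]

lemma tropMulMat_one_right (hφ : IsTropicalRep φ) (g : G) : tropMulMat (φ g) (φ 1) = φ g := by
  rw [← hφ, mul_one]

lemma transports_le (hφ : IsTropicalRep φ) (g : G) (i k : Fin n) : φ g i k + φ g⁻¹ k i ≤ 0 :=
  (hφ.add_le g g⁻¹ i k i).trans
    (mul_inv_cancel g ▸ diag_nonpos_of_idempotent (hφ.tropMulMat_one_left 1) i)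

lemma transports_mul (hφ : IsTropicalRep φ) {g h : G} {i k m : Fin n}
    (hg : Transports φ g i k) (hh : Transports φ h k m) : Transports φ (g * h) i m := by
  refine le_antisymm (hφ.transports_le _ _ _) ?_
  calc (0 : Trop) = (φ g i k + φ g⁻¹ k i) + (φ h k m + φ h⁻¹ m k) := by rw [hg, hh, add_zero]
    _ = (φ g i k + φ h k m) + (φ h⁻¹ m k + φ g⁻¹ k i) := by abel
    _ ≤ φ (g * h) i m + φ (g * h)⁻¹ m i := by
      rw [mul_inv_rev]; exact add_le_add (hφ.add_le _ _ _ _ _) (hφ.add_le _ _ _ _ _)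

lemma transports_unique (hφ : IsTropicalRep φ) {g : G} {i k l : Fin n}
    (hk : Transports φ g k i) (hl : Transports φ g l i) : Transports φ 1 k l :=
  mul_inv_cancel g ▸ hφ.transports_mul hk hl.inv

lemma exists_transports (hφ : IsTropicalRep φ) (g : G) (i : CriticalIndex φ) :
    ∃ k : CriticalIndex φ, Transports φ g k i := by
  have hne : tropMulMat (φ g⁻¹) (φ g) i i ≠ ⊥ := by rw [← hφ, inv_mul_cancel, i.2]; simp
  obtain ⟨k, hk⟩ := exists_add_eq_of_tropMulMat_eq rfl hne
  rw [← hφ, inv_mul_cancel, i.2] at hk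
  have hT : Transports φ g k i := by rw [Transports, add_comm]; exact hk.symm
  refine ⟨⟨k, le_antisymm (diag_nonpos_of_idempotent (hφ.tropMulMat_one_left 1) k) ?_⟩, hT⟩
  calc (0 : Trop) = φ g k i + φ g⁻¹ i k := hT.symm
    _ ≤ φ (g * g⁻¹) k k := hφ.add_le _ _ _ _ _
    _ = φ 1 k k := by rw [mul_inv_cancel]

def criticalSetoid (hφ : IsTropicalRep φ) : Setoid (CriticalIndex φ) where
  r i j := Transports φ 1 i j
  iseqv := ⟨transports_one_self, fun h => by simpa only [inv_one] using h.inv,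
    fun h₁ h₂ => by simpa only [one_mul] using hφ.transports_mul h₁ h₂⟩

abbrev CriticalClass (hφ : IsTropicalRep φ) : Type := Quotient hφ.criticalSetoid

/-- `g` sends the class of `i` to the class of an index that `g` carries to `i`; taking preimages
turns the right action recorded by `Transports` into a left action. -/
noncomputable instance (hφ : IsTropicalRep φ) : SMul G (CriticalClass hφ) where
  smul g := Quotient.map (fun i => (hφ.exists_transports g i).choose) fun i j hij =>
    hφ.transports_unique
      (by simpa only [mul_one] using hφ.transports_mul (hφ.exists_transports g i).choose_spec hij)
      (hφ.exists_transports g j).choose_spec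

lemma smul_mk_eq_mk_iff (hφ : IsTropicalRep φ) (g : G) (i k : CriticalIndex φ) :
    g • (Quotient.mk _ i : CriticalClass hφ) = Quotient.mk _ k ↔ Transports φ g k i := by
  have hc := (hφ.exists_transports g i).choose_spec
  change Quotient.mk _ _ = _ ↔ _
  rw [Quotient.eq]
  refine ⟨fun h => ?_, hφ.transports_unique hc⟩
  simpa only [one_mul] using hφ.transports_mul (hφ.criticalSetoid.symm h) hc

noncomputable instance (hφ : IsTropicalRep φ) : MulAction G (CriticalClass hφ) where
  one_smul q := Quotient.inductionOn q fun i =>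
    (hφ.smul_mk_eq_mk_iff 1 i i).2 (transports_one_self i)
  mul_smul g h q := Quotient.inductionOn q fun i => by
    obtain ⟨k, hk⟩ := hφ.exists_transports h i
    obtain ⟨l, hl⟩ := hφ.exists_transports g k
    rw [(hφ.smul_mk_eq_mk_iff h i k).2 hk, (hφ.smul_mk_eq_mk_iff g k l).2 hl]
    exact (hφ.smul_mk_eq_mk_iff _ i l).2 (hφ.transports_mul hl hk)

lemma mem_ker_toPermHom_iff (hφ : IsTropicalRep φ) {g : G} :
    g ∈ (MulAction.toPermHom G (CriticalClass hφ)).ker ↔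
      ∀ i : CriticalIndex φ, Transports φ g i i := by
  simp only [MonoidHom.mem_ker, Equiv.ext_iff, MulAction.toPermHom_apply, MulAction.toPerm_apply,
    Equiv.Perm.coe_one, id_eq, Quotient.forall, hφ.smul_mk_eq_mk_iff]

lemma card_criticalClass_le (hφ : IsTropicalRep φ) : Nat.card (CriticalClass hφ) ≤ n :=
  calc Nat.card (CriticalClass hφ) ≤ Nat.card (CriticalIndex φ) :=
        Nat.card_le_card_of_surjective _ Quotient.mk_surjective
    _ ≤ Nat.card (Fin n) := Nat.card_le_card_of_injective _ Subtype.val_injective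
    _ = n := Nat.card_fin n

theorem apply_eq_apply_one (hφ : IsTropicalRep φ) {g : G} (hg : ∀ i, φ 1 i i = 0 → φ g i i = 0)
    (hg' : ∀ i, φ 1 i i = 0 → φ g⁻¹ i i = 0) : φ g = φ 1 :=
  eq_of_eq_on_critical (hφ.tropMulMat_one_left 1) (hφ.tropMulMat_one_left g)
    (hφ.tropMulMat_one_right g) (hφ.tropMulMat_one_left 1) (hφ.tropMulMat_one_left 1)
    fun k l hk hl => le_antisymm
      (by simpa [hg' l hl] using hφ.add_le g g⁻¹ k l l)
      (by simpa [hg k hk] using hφ.add_le g 1 k k l)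

lemma diag_mul (hφ : IsTropicalRep φ) {g h : G} {i : Fin n} (hg : Transports φ g i i)
    (hh : Transports φ h i i) : φ (g * h) i i = φ g i i + φ h i i := by
  refine Trop.eq_of_le_of_add_eq_zero (hφ.add_le g h i i i) (x' := φ h⁻¹ i i + φ g⁻¹ i i)
    (by rw [mul_inv_rev]; exact hφ.add_le _ _ i i i) ?_ (hφ.transports_le _ _ _)
  calc φ g i i + φ h i i + (φ h⁻¹ i i + φ g⁻¹ i i)
      = (φ g i i + φ g⁻¹ i i) + (φ h i i + φ h⁻¹ i i) := by abel
    _ = 0 := by rw [hg, hh, add_zero]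

/-- `unbotD 0` loses nothing: on the kernel the critical diagonal entries are finite
(`Transports.diag_ne_bot`). -/
noncomputable def diagHom (hφ : IsTropicalRep φ) :
    (MulAction.toPermHom G (CriticalClass hφ)).ker →* Multiplicative (CriticalIndex φ → ℝ) where
  toFun g := Multiplicative.ofAdd fun i => (φ g i i).unbotD 0
  map_one' := by ext i; simp [i.2]
  map_mul' g h := by
    ext i
    have hg := hφ.mem_ker_toPermHom_iff.1 g.2 i
    have hh := hφ.mem_ker_toPermHom_iff.1 h.2 i
    show (φ (g * h : G) i i).unbotD 0 = (φ g i i).unbotD 0 + (φ h i i).unbotD 0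
    rw [hφ.diag_mul hg hh, Trop.unbotD_add hg.diag_ne_bot hh.diag_ne_bot]

lemma diagHom_injective (hφ : IsTropicalRep φ) (hinj : Function.Injective φ) :
    Function.Injective hφ.diagHom := by
  refine (injective_iff_map_eq_one _).2 fun g hg => Subtype.ext (hinj ?_)
  have hdiag (i : CriticalIndex φ) : φ g i i = 0 := by
    have hi : (φ g i i).unbotD 0 = 0 := congrFun (congrArg Multiplicative.toAdd hg) i
    exact (WithBot.unbotD_eq_iff.1 hi).resolve_right fun h =>
      (hφ.mem_ker_toPermHom_iff.1 g.2 i).diag_ne_bot h.1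
  refine hφ.apply_eq_apply_one (fun i hi => hdiag ⟨i, hi⟩) fun i hi => ?_
  simpa [hdiag ⟨i, hi⟩, Transports] using hφ.mem_ker_toPermHom_iff.1 g.2 ⟨i, hi⟩

end IsTropicalRep

end Representation

theorem torsionFree_abelian_subgroup_of_tropical_rep {n : ℕ}
    (G : Type*) [Group G] (φ : G → Matrix (Fin n) (Fin n) Trop)
    (hinj : Function.Injective φ)
    (hmul : ∀ g h : G, φ (g * h) = tropMulMat (φ g) (φ h)) :
    ∃ H : Subgroup G,
      (∀ a b : H, a * b = b * a) ∧
      (∀ a : H, IsOfFinOrder a → a = 1) ∧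
      0 < H.index ∧ H.index ≤ Nat.factorial n := by
  have hφ : IsTropicalRep φ := hmul
  have hχ := hφ.diagHom_injective hinj
  have := Function.Injective.isMulTorsionFree _ hχ
  refine ⟨_, fun a b => hχ (by rw [map_mul, map_mul, mul_comm]), fun a ha => ha.eq_one',
    MulAction.index_ker_toPermHom_pos G (IsTropicalRep.CriticalClass hφ), ?_⟩
  exact (MulAction.index_ker_toPermHom_le G _).trans (Nat.factorial_le hφ.card_criticalClass_le)
end

section
/- Let 𝒢 be a group of monomial tropical n×n matrices (a subgroup of the semigroup (𝕋^{n×n}, ⊗) all of whose elements are monomial matrices). Then the set D of diagonal matrices in 𝒢 is a normal subgroup of 𝒢 which is abelian and torsion-free, two matrices A, B ∈ 𝒢 lie in the same coset of D if and only if σ(A) = σ(B), and the index of D in 𝒢 is at most n!. -/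
/-- A monomial matrix is diagonal if its permutation is the identity. -/
def IsDiagonalMat {n : ℕ} (P : Matrix (Fin n) (Fin n) Trop) : Prop :=
  ∀ i j, P i j ≠ ⊥ ↔ i = j

/-- `tropIter A k` is the `(k+1)`-st tropical power `A^(k+1)` of `A`. -/
def tropIter {n : ℕ} (A : Matrix (Fin n) (Fin n) Trop) :
    ℕ → Matrix (Fin n) (Fin n) Trop
  | 0 => A
  | k + 1 => tropMulMat A (tropIter A k)

lemma trop_mul_apply {n : ℕ} {B : Matrix (Fin n) (Fin n) Trop}
    {τ : Equiv.Perm (Fin n)} (hB : ∀ i j, B i j ≠ ⊥ ↔ i = τ j)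
    (A : Matrix (Fin n) (Fin n) Trop) (i j : Fin n) :
    tropMulMat A B i j = A i (τ j) + B (τ j) j := by
  unfold tropMulMat
  refine le_antisymm (Finset.sup_le fun k _ => ?_)
    (Finset.le_sup (f := fun k => A i k + B k j) (Finset.mem_univ (τ j)))
  by_cases hk : k = τ j
  · subst hk; exact le_rfl
  · have hb : B k j = ⊥ := by
      by_contra h; exact hk ((hB k j).mp h)
    rw [hb, WithBot.add_bot]; exact bot_le

lemma char_mul {n : ℕ} {A B : Matrix (Fin n) (Fin n) Trop}
    {σ τ : Equiv.Perm (Fin n)} (hA : ∀ i j, A i j ≠ ⊥ ↔ i = σ j)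
    (hB : ∀ i j, B i j ≠ ⊥ ↔ i = τ j) :
    ∀ i j, tropMulMat A B i j ≠ ⊥ ↔ i = (σ * τ) j := by
  intro i j
  rw [trop_mul_apply hB]
  simp only [Ne, WithBot.add_eq_bot, not_or, Equiv.Perm.mul_apply]
  constructor
  · rintro ⟨h1, _⟩; exact (hA _ _).mp h1
  · intro h; exact ⟨(hA _ _).mpr h, (hB _ _).mpr rfl⟩

lemma char_unique {n : ℕ} {A : Matrix (Fin n) (Fin n) Trop}
    {σ σ' : Equiv.Perm (Fin n)} (h : ∀ i j, A i j ≠ ⊥ ↔ i = σ j)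
    (h' : ∀ i j, A i j ≠ ⊥ ↔ i = σ' j) : σ = σ' := by
  exact Equiv.ext fun j => (h' _ j).mp ((h (σ j) j).mpr rfl)

lemma trop_assoc {n : ℕ} {B C : Matrix (Fin n) (Fin n) Trop}
    {τ ρ : Equiv.Perm (Fin n)} (hB : ∀ i j, B i j ≠ ⊥ ↔ i = τ j)
    (hC : ∀ i j, C i j ≠ ⊥ ↔ i = ρ j) (A : Matrix (Fin n) (Fin n) Trop) :
    tropMulMat (tropMulMat A B) C = tropMulMat A (tropMulMat B C) := by
  have hBC := char_mul hB hC
  funext i j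
  rw [trop_mul_apply hC, trop_mul_apply hB, trop_mul_apply hBC, trop_mul_apply hC]
  simp [Equiv.Perm.mul_apply, add_assoc]

theorem diagonal_matrices_form_normal_abelian_torsionFree_subgroup {n : ℕ}
    (S : Set (Matrix (Fin n) (Fin n) Trop))
    (hclosed : ∀ A ∈ S, ∀ B ∈ S, tropMulMat A B ∈ S)
    (E : Matrix (Fin n) (Fin n) Trop) (hE : E ∈ S)
    (hEneut : ∀ A ∈ S, tropMulMat E A = A ∧ tropMulMat A E = A)
    (hinv : ∀ A ∈ S, ∃ B ∈ S, tropMulMat A B = E ∧ tropMulMat B A = E)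
    (hmono : ∀ A ∈ S, IsMonomial A) :
    -- the subset `D` of diagonal matrices of `𝒢`
    (fun D : Set (Matrix (Fin n) (Fin n) Trop) =>
      -- `D` is a subgroup: it contains the neutral element, is closed under
      -- multiplication and under inverses
      (E ∈ D ∧ (∀ A ∈ D, ∀ B ∈ D, tropMulMat A B ∈ D) ∧
        ∀ A ∈ D, ∃ B ∈ D, tropMulMat A B = E ∧ tropMulMat B A = E) ∧
      -- `D` is normal in `𝒢`
      (∀ G ∈ S, ∀ G' ∈ S, tropMulMat G G' = E →
        ∀ A ∈ D, tropMulMat (tropMulMat G A) G' ∈ D) ∧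
      -- `D` is abelian
      (∀ A ∈ D, ∀ B ∈ D, tropMulMat A B = tropMulMat B A) ∧
      -- `D` is torsion-free: an element with `A^(k+1) = E` equals `E`
      (∀ A ∈ D, ∀ k : ℕ, tropIter A k = E → A = E) ∧
      -- two elements of `𝒢` lie in the same (left) coset of `D` iff they have
      -- the same underlying permutation
      (∀ A ∈ S, ∀ B ∈ S, ∀ σA σB : Equiv.Perm (Fin n),
        (∀ i j, A i j ≠ ⊥ ↔ i = σA j) → (∀ i j, B i j ≠ ⊥ ↔ i = σB j) →
        ((∃ X ∈ D, A = tropMulMat B X) ↔ σA = σB)) ∧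
      -- the index of `D` in `𝒢` is at most `n!`: there are at most `n!` left
      -- cosets of `D`
      ({T : Set (Matrix (Fin n) (Fin n) Trop) |
          ∃ B ∈ S, T = (fun X => tropMulMat B X) '' D}.Finite ∧
        {T : Set (Matrix (Fin n) (Fin n) Trop) |
          ∃ B ∈ S, T = (fun X => tropMulMat B X) '' D}.ncard ≤ Nat.factorial n))
      {A ∈ S | IsDiagonalMat A} := by
    classical
  dsimp only
  -- basic facts about E
  obtain ⟨ε, hε⟩ := hmono E hE
  have hEE : tropMulMat E E = E := (hEneut E hE).1
  have hε1 : ε = 1 := by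
    have h2 := char_mul hε hε
    rw [hEE] at h2
    have h3 : ε * ε = ε := char_unique h2 hε
    exact mul_left_cancel (a := ε) (by rw [mul_one]; exact h3)
  have hEchar : ∀ i j, E i j ≠ ⊥ ↔ i = (1 : Equiv.Perm (Fin n)) j := hε1 ▸ hε
  have memD : ∀ X, X ∈ {A ∈ S | IsDiagonalMat A} ↔
      X ∈ S ∧ ∀ i j, X i j ≠ ⊥ ↔ i = (1 : Equiv.Perm (Fin n)) j := by
    intro X
    simp only [Set.mem_setOf_eq, IsDiagonalMat, Equiv.Perm.one_apply]
  have botOf : ∀ {X : Matrix (Fin n) (Fin n) Trop},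
      (∀ i j, X i j ≠ ⊥ ↔ i = (1 : Equiv.Perm (Fin n)) j) →
      ∀ i j, i ≠ j → X i j = ⊥ := by
    intro X hX i j hij
    by_contra h
    exact hij (by simpa using (hX i j).mp h)
  have hE0 : ∀ i, E i i = ((0 : ℝ) : Trop) := by
    intro i
    have h := congrFun (congrFun hEE i) i
    rw [trop_mul_apply hEchar] at h
    simp only [Equiv.Perm.one_apply] at h
    obtain ⟨e, he⟩ := WithBot.ne_bot_iff_exists.mp ((hEchar i i).mpr (by simp))
    rw [← he, ← WithBot.coe_add] at h
    rw [← he]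
    have h2 : e + e = e := WithBot.coe_inj.mp h
    have : e = 0 := by linarith
    rw [this]
  -- E ∈ D
  have hED : E ∈ {A ∈ S | IsDiagonalMat A} := (memD E).mpr ⟨hE, hEchar⟩
  -- closure of D
  have hDmul : ∀ A ∈ {A ∈ S | IsDiagonalMat A}, ∀ B ∈ {A ∈ S | IsDiagonalMat A},
      tropMulMat A B ∈ {A ∈ S | IsDiagonalMat A} := by
    intro A hA B hB
    obtain ⟨hAS, hA1⟩ := (memD A).mp hA
    obtain ⟨hBS, hB1⟩ := (memD B).mp hB
    refine (memD _).mpr ⟨hclosed A hAS B hBS, ?_⟩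
    have := char_mul hA1 hB1
    rwa [one_mul] at this
  -- inverses in D
  have hDinv : ∀ A ∈ {A ∈ S | IsDiagonalMat A}, ∃ B ∈ {A ∈ S | IsDiagonalMat A},
      tropMulMat A B = E ∧ tropMulMat B A = E := by
    intro A hA
    obtain ⟨hAS, hA1⟩ := (memD A).mp hA
    obtain ⟨B, hBS, hAB, hBA⟩ := hinv A hAS
    obtain ⟨τ, hτ⟩ := hmono B hBS
    have h2 := char_mul hA1 hτ
    rw [hAB] at h2
    have hτ1 : (1 : Equiv.Perm (Fin n)) * τ = 1 := char_unique h2 hEchar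
    rw [one_mul] at hτ1
    exact ⟨B, (memD B).mpr ⟨hBS, hτ1 ▸ hτ⟩, hAB, hBA⟩
  -- coset characterisation (proved first, reused later)
  have coset : ∀ A ∈ S, ∀ B ∈ S, ∀ σA σB : Equiv.Perm (Fin n),
      (∀ i j, A i j ≠ ⊥ ↔ i = σA j) → (∀ i j, B i j ≠ ⊥ ↔ i = σB j) →
      ((∃ X ∈ {A ∈ S | IsDiagonalMat A}, A = tropMulMat B X) ↔ σA = σB) := by
    intro A hAS B hBS σA σB hA1 hB1
    constructor
    · rintro ⟨X, hX, rfl⟩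
      obtain ⟨hXS, hX1⟩ := (memD X).mp hX
      have h2 := char_mul hB1 hX1
      rw [mul_one] at h2
      exact char_unique hA1 h2
    · intro h
      subst h
      obtain ⟨B', hB'S, hBB', hB'B⟩ := hinv B hBS
      obtain ⟨τ', hτ'⟩ := hmono B' hB'S
      have h2 := char_mul hB1 hτ'
      rw [hBB'] at h2
      have hτ1 : σA * τ' = 1 := char_unique h2 hEchar
      refine ⟨tropMulMat B' A, (memD _).mpr ⟨hclosed B' hB'S A hAS, ?_⟩, ?_⟩
      · have h3 := char_mul hτ' hA1
        have hτσ : τ' = σA⁻¹ := eq_inv_of_mul_eq_one_right hτ1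
        have : τ' * σA = 1 := by rw [hτσ]; exact inv_mul_cancel σA
        rwa [this] at h3
      · rw [← trop_assoc hτ' hA1 B, hBB', (hEneut A hAS).1]
  refine ⟨⟨hED, hDmul, hDinv⟩, ?_, ?_, ?_, coset, ?_⟩
  · -- normality
    intro G hG G' hG' hGG' A hA
    obtain ⟨hAS, hA1⟩ := (memD A).mp hA
    obtain ⟨π, hπ⟩ := hmono G hG
    obtain ⟨π', hπ'⟩ := hmono G' hG'
    have h2 := char_mul hπ hπ'
    rw [hGG'] at h2
    have hππ' : π * π' = 1 := char_unique h2 hEchar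
    have hGA := char_mul hπ hA1
    have h3 := char_mul hGA hπ'
    rw [mul_one, hππ'] at h3
    exact (memD _).mpr ⟨hclosed _ (hclosed G hG A hAS) G' hG', h3⟩
  · -- abelian
    intro A hA B hB
    obtain ⟨hAS, hA1⟩ := (memD A).mp hA
    obtain ⟨hBS, hB1⟩ := (memD B).mp hB
    funext i j
    rw [trop_mul_apply hB1, trop_mul_apply hA1]
    simp only [Equiv.Perm.one_apply]
    by_cases hij : i = j
    · subst hij; exact add_comm _ _
    · rw [botOf hA1 i j hij, botOf hB1 i j hij, WithBot.bot_add, WithBot.bot_add]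
  · -- torsion-free
    intro A hA k hk
    obtain ⟨hAS, hA1⟩ := (memD A).mp hA
    have iter_char : ∀ m, ∀ i j, tropIter A m i j ≠ ⊥ ↔ i = (1 : Equiv.Perm (Fin n)) j := by
      intro m
      induction m with
      | zero => exact hA1
      | succ m ih =>
        have := char_mul hA1 ih
        rwa [one_mul] at this
    have key : ∀ i, ∀ a : ℝ, A i i = (a : Trop) →
        ∀ m, tropIter A m i i = ((((m : ℝ) + 1) * a : ℝ) : Trop) := by
      intro i a ha m
      induction m with
      | zero => simp [tropIter, ha]
      | succ m ih =>
        show tropMulMat A (tropIter A m) i i = _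
        rw [trop_mul_apply (iter_char m)]
        simp only [Equiv.Perm.one_apply]
        rw [ha, ih, ← WithBot.coe_add]
        congr 1
        push_cast
        ring
    funext i j
    by_cases hij : i = j
    · subst hij
      obtain ⟨a, ha⟩ := WithBot.ne_bot_iff_exists.mp ((hA1 i i).mpr (by simp))
      have h2 := key i a ha.symm k
      rw [hk, hE0 i] at h2
      have h3 : ((k : ℝ) + 1) * a = 0 := WithBot.coe_inj.mp h2.symm
      have hk1 : ((k : ℝ) + 1) ≠ 0 := by positivity
      have ha0 : a = 0 := by
        rcases mul_eq_zero.mp h3 with h | h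
        · exact absurd h hk1
        · exact h
      rw [← ha, ha0, hE0 i]
    · rw [botOf hA1 i j hij, botOf hEchar i j hij]
  · -- finiteness and index bound
    set g : Equiv.Perm (Fin n) → Set (Matrix (Fin n) (Fin n) Trop) :=
      fun σ => {A | A ∈ S ∧ ∀ i j, A i j ≠ ⊥ ↔ i = σ j} with hg
    have hsub : {T : Set (Matrix (Fin n) (Fin n) Trop) |
        ∃ B ∈ S, T = (fun X => tropMulMat B X) '' {A ∈ S | IsDiagonalMat A}} ⊆
        Set.range g := by
      rintro T ⟨B, hB, rfl⟩
      obtain ⟨σB, hσB⟩ := hmono B hB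
      refine ⟨σB, ?_⟩
      ext A
      simp only [hg, Set.mem_image, Set.mem_setOf_eq]
      constructor
      · rintro ⟨hAS, hA1⟩
        obtain ⟨X, hX, hAX⟩ := (coset A hAS B hB σB σB hA1 hσB).mpr rfl
        exact ⟨X, hX, hAX.symm⟩
      · rintro ⟨X, hX, rfl⟩
        obtain ⟨hXS, hX1⟩ := (memD X).mp hX
        have h2 := char_mul hσB hX1
        rw [mul_one] at h2
        exact ⟨hclosed B hB X hXS, h2⟩
    have hfin : (Set.range g).Finite := Set.finite_range g
    refine ⟨hfin.subset hsub, ?_⟩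
    calc {T : Set (Matrix (Fin n) (Fin n) Trop) |
          ∃ B ∈ S, T = (fun X => tropMulMat B X) '' {A ∈ S | IsDiagonalMat A}}.ncard
        ≤ (Set.range g).ncard := Set.ncard_le_ncard hsub hfin
      _ ≤ Nat.card (Equiv.Perm (Fin n)) := by
          rw [← Set.image_univ]
          calc (g '' Set.univ).ncard ≤ Set.univ.ncard := Set.ncard_image_le Set.finite_univ
            _ = Nat.card (Equiv.Perm (Fin n)) := Set.ncard_univ _
      _ = Nat.factorial n := by
          simp [Nat.card_eq_fintype_card, Fintype.card_perm]
end

section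
/- A group 𝒢 admits a faithful representation by n×n tropical matrices if and only if 𝒢 is isomorphic to a subgroup of the wreath product ℝ ≀ S_n; that is, there exists an injective map φ : 𝒢 → 𝕋^{n×n} with φ(gh) = φ(g) ⊗ φ(h) for all g, h ∈ 𝒢 if and only if there exists an injective group homomorphism from 𝒢 into (ℝ^n) ⋊ S_n (with S_n acting on ℝ^n by permuting coordinates). -/
/-- The action of `S_n` on the (multiplicative version of the) additive group
`ℝ^n` by permuting coordinates. -/
def permAct (n : ℕ) : Equiv.Perm (Fin n) →* MulAut (Multiplicative (Fin n → ℝ)) where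
  toFun σ :=
    { toFun := fun v => fun i => v (σ⁻¹ i)
      invFun := fun v => fun i => v (σ i)
      left_inv := fun v => by funext i; simp
      right_inv := fun v => by funext i; simp
      map_mul' := fun v w => rfl }
  map_one' := by ext v; rfl
  map_mul' := fun σ τ => by ext v; rfl

/-- The wreath product `ℝ ≀ S_n`, realized as the semidirect product
`(ℝ^n) ⋊ S_n` with `S_n` acting by permuting coordinates. -/
abbrev WreathRSn (n : ℕ) : Type :=
  Multiplicative (Fin n → ℝ) ⋊[permAct n] Equiv.Perm (Fin n)

namespace Trop

theorem nonpos_of_add_self_le {x : Trop} (h : x + x ≤ x) : x ≤ 0 := by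
  induction x using WithBot.recBotCoe with
  | bot => exact bot_le
  | coe a => exact_mod_cast (by linarith [(by exact_mod_cast h : a + a ≤ a)] : a ≤ 0)

theorem eq_zero_of_add_eq_self {x y : Trop} (hy : y ≠ ⊥) (h : x + y = y) : x = 0 := by
  lift y to ℝ using hy
  induction x using WithBot.recBotCoe with
  | bot => simp at h
  | coe a => exact_mod_cast (by linarith [(by exact_mod_cast h : a + y = y)] : a = 0)

theorem eq_of_le_of_le_of_add_eq_zero {a b c d : Trop} (hac : a ≤ c) (hbd : b ≤ d)
    (hab : a + b = 0) (hcd : c + d ≤ 0) : a = c := by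
  have ha : a ≠ ⊥ := by rintro rfl; simp at hab
  have hb : b ≠ ⊥ := by rintro rfl; simp at hab
  lift a to ℝ using ha
  lift b to ℝ using hb
  lift c to ℝ using ne_bot_of_le_ne_bot WithBot.coe_ne_bot hac
  lift d to ℝ using ne_bot_of_le_ne_bot WithBot.coe_ne_bot hbd
  norm_cast at *
  linarith

end Trop

section TropMulMat

variable {n m p : ℕ}

theorem add_le_tropMulMat_apply (A : Matrix (Fin n) (Fin m) Trop)
    (B : Matrix (Fin m) (Fin p) Trop) (i : Fin n) (k : Fin m) (j : Fin p) :
    A i k + B k j ≤ tropMulMat A B i j :=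
  Finset.le_sup (f := fun k => A i k + B k j) (Finset.mem_univ k)

theorem exists_tropMulMat_apply_eq [NeZero m] (A : Matrix (Fin n) (Fin m) Trop)
    (B : Matrix (Fin m) (Fin p) Trop) (i : Fin n) (j : Fin p) :
    ∃ k, tropMulMat A B i j = A i k + B k j := by
  obtain ⟨k, -, hk⟩ := Finset.exists_mem_eq_sup Finset.univ Finset.univ_nonempty
    (fun k => A i k + B k j)
  exact ⟨k, hk⟩

end TropMulMat

section Idempotent

variable {n : ℕ} {E : Matrix (Fin n) (Fin n) Trop}

theorem add_le_of_tropMulMat_self (hE : tropMulMat E E = E) (i k j : Fin n) :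
    E i k + E k j ≤ E i j :=
  (add_le_tropMulMat_apply E E i k j).trans_eq (by rw [hE])

theorem diag_nonpos_of_tropMulMat_self (hE : tropMulMat E E = E) (i : Fin n) : E i i ≤ 0 :=
  Trop.nonpos_of_add_self_le (add_le_of_tropMulMat_self hE i i i)

theorem exists_diag_eq_zero_of_tropMulMat_self (hE : tropMulMat E E = E) {i j : Fin n}
    (hij : E i j ≠ ⊥) : ∃ k, E k k = 0 ∧ E i k + E k j = E i j := by
  have : NeZero n := NeZero.of_pos i.pos
  let R : Fin n → Fin n → Prop := fun a b => E a b + E b j = E a j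
  have hR : IsTrans (Fin n) R := ⟨fun a b c (hab : R a b) (hbc : R b c) =>
    le_antisymm (add_le_of_tropMulMat_self hE a c j) <|
      calc E a j = E a b + E b c + E c j := by rw [add_assoc, hbc, hab]
        _ ≤ E a c + E c j := by gcongr; exact add_le_of_tropMulMat_self hE a b c⟩
  have hstep (a : Fin n) : ∃ b, R a b := by
    obtain ⟨b, hb⟩ := exists_tropMulMat_apply_eq E E a j
    exact ⟨b, show E a b + E b j = E a j by rw [← hb, hE]⟩
  choose next hnext using hstep
  -- greedily extend a maximal path from `i` to `j`; by pigeonhole it revisits a vertex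
  let a : ℕ → Fin n := fun t => next^[t] i
  have chain : ∀ ⦃s t⦄, s < t → R (a s) (a t) :=
    Nat.rel_of_forall_rel_succ_of_lt R fun t => by
      simpa only [a, Function.iterate_succ_apply'] using hnext (a t)
  obtain ⟨s, t, hst, hloop⟩ := Finite.exists_ne_map_eq_of_infinite a
  wlog hlt : s < t generalizing s t
  · exact this t s hst.symm hloop.symm (hst.lt_or_gt.resolve_left hlt)
  have hss : R (a s) (a s) := by simpa only [hloop] using chain hlt
  have his : R i (a s) := by
    rcases s.eq_zero_or_pos with rfl | hs
    exacts [hss, chain hs]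
  refine ⟨a s, Trop.eq_zero_of_add_eq_self ?_ hss, his⟩
  rintro hbot
  exact hij (by rw [← his, hbot, WithBot.add_bot])

end Idempotent

section TropRep

variable {G : Type*} [Group G] {n : ℕ}

def IsTropRep (φ : G → Matrix (Fin n) (Fin n) Trop) : Prop :=
  ∀ g h : G, φ (g * h) = tropMulMat (φ g) (φ h)

namespace IsTropRep

def Matched (φ : G → Matrix (Fin n) (Fin n) Trop) (g : G) (i k : Fin n) : Prop :=
  φ g i k + φ g⁻¹ k i = 0

variable {φ : G → Matrix (Fin n) (Fin n) Trop}

theorem add_le_apply_mul (hφ : IsTropRep φ) (g h : G) (i k j : Fin n) :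
    φ g i k + φ h k j ≤ φ (g * h) i j :=
  (add_le_tropMulMat_apply _ _ i k j).trans_eq (by rw [hφ])

theorem tropMulMat_one_self (hφ : IsTropRep φ) : tropMulMat (φ 1) (φ 1) = φ 1 := by
  rw [← hφ, one_mul]

theorem apply_add_apply_inv_le (hφ : IsTropRep φ) (g : G) (i k : Fin n) :
    φ g i k + φ g⁻¹ k i ≤ 0 := by
  rw [add_comm]
  exact (hφ.add_le_apply_mul g⁻¹ g k i k).trans
    (by simpa using diag_nonpos_of_tropMulMat_self hφ.tropMulMat_one_self k)

theorem exists_matched (hφ : IsTropRep φ) {i : Fin n} (hi : φ 1 i i = 0) (g : G) :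
    ∃ k, Matched φ g i k := by
  have : NeZero n := NeZero.of_pos i.pos
  obtain ⟨k, hk⟩ := exists_tropMulMat_apply_eq (φ g) (φ g⁻¹) i i
  exact ⟨k, by rw [Matched, ← hk, ← hφ, mul_inv_cancel, hi]⟩

theorem matched_one_self {i : Fin n} (hi : φ 1 i i = 0) : Matched φ 1 i i := by
  rw [Matched, inv_one, hi, add_zero]

namespace Matched

variable {g h : G} {i k m : Fin n}

theorem inv (hik : Matched φ g i k) : Matched φ g⁻¹ k i := by
  rw [Matched, inv_inv, add_comm]
  exact hik

theorem apply_mul (hφ : IsTropRep φ) (hik : Matched φ g i k) (hkm : Matched φ h k m) :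
    φ (g * h) i m = φ g i k + φ h k m := by
  refine (Trop.eq_of_le_of_le_of_add_eq_zero (hφ.add_le_apply_mul g h i k m)
    (mul_inv_rev g h ▸ hφ.add_le_apply_mul h⁻¹ g⁻¹ m k i) ?_
    (hφ.apply_add_apply_inv_le (g * h) i m)).symm
  rw [Matched] at hik hkm
  calc _ = (φ g i k + φ g⁻¹ k i) + (φ h k m + φ h⁻¹ m k) := by abel
    _ = 0 := by rw [hik, hkm, add_zero]

theorem mul (hφ : IsTropRep φ) (hik : Matched φ g i k) (hkm : Matched φ h k m) :
    Matched φ (g * h) i m := by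
  rw [Matched, mul_inv_rev, hik.apply_mul hφ hkm, hkm.inv.apply_mul hφ hik.inv]
  rw [Matched] at hik hkm
  calc _ = (φ g i k + φ g⁻¹ k i) + (φ h k m + φ h⁻¹ m k) := by abel
    _ = 0 := by rw [hik, hkm, add_zero]

theorem diag_eq_zero (hφ : IsTropRep φ) (hik : Matched φ g i k) : φ 1 k k = 0 := by
  rw [← inv_mul_cancel g, hik.inv.apply_mul hφ hik, add_comm]
  exact hik

theorem apply_ne_bot (hik : Matched φ g i k) : φ g i k ≠ ⊥ := by
  intro h
  rw [Matched, h, WithBot.bot_add] at hik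
  exact WithBot.bot_ne_zero hik

theorem apply_eq_add (hφ : IsTropRep φ) (hik : Matched φ g i k) (l : Fin n) :
    φ g i l = φ g i k + φ 1 k l := by
  refine le_antisymm ?_ ((hφ.add_le_apply_mul g 1 i k l).trans_eq (by rw [mul_one]))
  calc φ g i l = (φ g i k + φ g⁻¹ k i) + φ g i l := by rw [hik, zero_add]
    _ = φ g i k + (φ g⁻¹ k i + φ g i l) := add_assoc _ _ _
    _ ≤ φ g i k + φ 1 k l := by
      gcongr
      exact inv_mul_cancel g ▸ hφ.add_le_apply_mul g⁻¹ g k i l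

end Matched

noncomputable def pick (φ : G → Matrix (Fin n) (Fin n) Trop) (g : G) (i : Fin n) : Fin n :=
  @Classical.epsilon _ ⟨i⟩ (Matched φ g i)

noncomputable def rep (φ : G → Matrix (Fin n) (Fin n) Trop) (i : Fin n) : Fin n :=
  pick φ 1 i

def IsRep (φ : G → Matrix (Fin n) (Fin n) Trop) (i : Fin n) : Prop :=
  φ 1 i i = 0 ∧ rep φ i = i

open Classical in
/-- The permutation of the class representatives induced by `g`, extended by the identity. -/
noncomputable def permFun (φ : G → Matrix (Fin n) (Fin n) Trop) (g : G) (i : Fin n) : Fin n :=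
  if IsRep φ i then rep φ (pick φ g i) else i

open Classical in
noncomputable def vec (φ : G → Matrix (Fin n) (Fin n) Trop) (g : G) (i : Fin n) : ℝ :=
  if IsRep φ i then (φ g i (permFun φ g i)).unbotD 0 else 0

variable {g h : G} {i k l : Fin n}

theorem matched_pick (hφ : IsTropRep φ) (hi : φ 1 i i = 0) : Matched φ g i (pick φ g i) :=
  Classical.epsilon_spec (hφ.exists_matched hi g)

theorem matched_rep (hφ : IsTropRep φ) (hi : φ 1 i i = 0) : Matched φ 1 i (rep φ i) :=
  hφ.matched_pick hi

theorem rep_eq_of_matched (hφ : IsTropRep φ) (hkl : Matched φ 1 k l) : rep φ k = rep φ l := by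
  have hsame : Matched φ 1 k = Matched φ 1 l := funext fun m => propext
    ⟨fun hkm => by simpa using hkl.inv.mul hφ hkm, fun hlm => by simpa using hkl.mul hφ hlm⟩
  simp only [rep, pick, hsame]

theorem isRep_rep (hφ : IsTropRep φ) (hi : φ 1 i i = 0) : IsRep φ (rep φ i) :=
  ⟨(hφ.matched_rep hi).diag_eq_zero hφ, (hφ.rep_eq_of_matched (hφ.matched_rep hi)).symm⟩

theorem permFun_of_not_isRep (hi : ¬IsRep φ i) : permFun φ g i = i := by
  rw [permFun, if_neg hi]

theorem permFun_eq_rep_of_matched (hφ : IsTropRep φ) (hi : IsRep φ i) (hik : Matched φ g i k) :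
    permFun φ g i = rep φ k := by
  rw [permFun, if_pos hi]
  exact hφ.rep_eq_of_matched (by simpa using (hφ.matched_pick (g := g) hi.1).inv.mul hφ hik)

theorem isRep_permFun (hφ : IsTropRep φ) (hi : IsRep φ i) : IsRep φ (permFun φ g i) := by
  rw [permFun, if_pos hi]
  exact hφ.isRep_rep ((hφ.matched_pick hi.1).diag_eq_zero hφ)

theorem matched_permFun (hφ : IsTropRep φ) (hi : IsRep φ i) :
    Matched φ g i (permFun φ g i) := by
  have hik := hφ.matched_pick (g := g) hi.1
  rw [permFun, if_pos hi]
  simpa using hik.mul hφ (hφ.matched_rep (hik.diag_eq_zero hφ))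

theorem permFun_one (hφ : IsTropRep φ) (i : Fin n) : permFun φ 1 i = i := by
  by_cases hi : IsRep φ i
  · rw [hφ.permFun_eq_rep_of_matched hi (matched_one_self hi.1), hi.2]
  · exact permFun_of_not_isRep hi

theorem permFun_mul (hφ : IsTropRep φ) (g h : G) (i : Fin n) :
    permFun φ (g * h) i = permFun φ h (permFun φ g i) := by
  by_cases hi : IsRep φ i
  · have hik := hφ.matched_permFun (g := g) hi
    have hkm := hφ.matched_permFun (g := h) (hφ.isRep_permFun (g := g) hi)
    rw [hφ.permFun_eq_rep_of_matched hi (hik.mul hφ hkm),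
      (hφ.isRep_permFun (hφ.isRep_permFun hi)).2]
  · rw [permFun_of_not_isRep hi, permFun_of_not_isRep hi, permFun_of_not_isRep hi]

theorem apply_permFun (hφ : IsTropRep φ) (hi : IsRep φ i) :
    φ g i (permFun φ g i) = vec φ g i := by
  obtain ⟨x, hx⟩ := WithBot.ne_bot_iff_exists.mp (hφ.matched_permFun (g := g) hi).apply_ne_bot
  rw [vec, if_pos hi, ← hx, WithBot.unbotD_coe]

theorem vec_mul (hφ : IsTropRep φ) (g h : G) (i : Fin n) :
    vec φ (g * h) i = vec φ g i + vec φ h (permFun φ g i) := by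
  by_cases hi : IsRep φ i
  · have hik := hφ.matched_permFun (g := g) hi
    have hk := hφ.isRep_permFun (g := g) hi
    have hkm := hφ.matched_permFun (g := h) hk
    have := hik.apply_mul hφ hkm
    rw [hφ.apply_permFun hi, hφ.apply_permFun hk, ← hφ.permFun_mul, hφ.apply_permFun hi] at this
    exact_mod_cast this
  · simp [vec, hi, permFun_of_not_isRep hi]

theorem apply_eq_of_diag_eq_zero (hφ : IsTropRep φ) (hk : φ 1 k k = 0) (g : G) (l : Fin n) :
    φ g k l = φ 1 k (rep φ k) + vec φ g (rep φ k) + φ 1 (permFun φ g (rep φ k)) l := by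
  have ht := hφ.isRep_rep hk
  have hkt := hφ.matched_rep hk
  have hts := hφ.matched_permFun (g := g) ht
  have hks : Matched φ g k (permFun φ g (rep φ k)) := by simpa using hkt.mul hφ hts
  have hkts := hkt.apply_mul hφ hts
  rw [one_mul] at hkts
  rw [hks.apply_eq_add hφ, ← hφ.apply_permFun ht, hkts]

theorem apply_le_of_diag_rows_eq (hφ : IsTropRep φ)
    (hgh : ∀ k, φ 1 k k = 0 → φ g k = φ h k) (i j : Fin n) : φ g i j ≤ φ h i j := by
  rw [← one_mul g, hφ]
  refine Finset.sup_le fun k _ => ?_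
  by_cases hik : φ 1 i k = ⊥
  · rw [hik, WithBot.bot_add]
    exact bot_le
  obtain ⟨k', hk', hik'⟩ :=
    exists_diag_eq_zero_of_tropMulMat_self hφ.tropMulMat_one_self hik
  calc φ 1 i k + φ g k j = φ 1 i k' + (φ 1 k' k + φ g k j) := by rw [← hik', add_assoc]
    _ ≤ φ 1 i k' + φ g k' j := by
      gcongr
      exact (hφ.add_le_apply_mul 1 g k' k j).trans_eq (by rw [one_mul])
    _ = φ 1 i k' + φ h k' j := by rw [hgh k' hk']
    _ ≤ φ h i j := (hφ.add_le_apply_mul 1 h i k' j).trans_eq (by rw [one_mul])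

theorem eq_of_diag_rows_eq (hφ : IsTropRep φ) (hgh : ∀ k, φ 1 k k = 0 → φ g k = φ h k) :
    φ g = φ h :=
  funext fun i => funext fun j => le_antisymm (hφ.apply_le_of_diag_rows_eq hgh i j)
    (hφ.apply_le_of_diag_rows_eq (fun k hk => (hgh k hk).symm) i j)

noncomputable def perm (hφ : IsTropRep φ) (g : G) : Equiv.Perm (Fin n) where
  toFun := permFun φ g
  invFun := permFun φ g⁻¹
  left_inv i := by rw [← hφ.permFun_mul, mul_inv_cancel, hφ.permFun_one]
  right_inv i := by rw [← hφ.permFun_mul, inv_mul_cancel, hφ.permFun_one]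

noncomputable def toWreath (hφ : IsTropRep φ) : G →* WreathRSn n :=
  MonoidHom.mk' (fun g => ⟨Multiplicative.ofAdd (vec φ g), (hφ.perm g)⁻¹⟩) fun g h => by
    refine SemidirectProduct.ext (funext fun i => hφ.vec_mul g h i) ?_
    rw [SemidirectProduct.mul_right, ← mul_inv_rev]
    exact congrArg (·⁻¹) (Equiv.ext fun i => hφ.permFun_mul g h i)

theorem toWreath_injective (hφ : IsTropRep φ) (hinj : Function.Injective φ) :
    Function.Injective hφ.toWreath := by
  intro g h hgh
  rw [SemidirectProduct.ext_iff] at hgh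
  have hvec : vec φ g = vec φ h := hgh.1
  have hperm : permFun φ g = permFun φ h := congrArg (⇑) (inv_injective hgh.2)
  refine hinj (hφ.eq_of_diag_rows_eq fun k hk => funext fun l => ?_)
  rw [hφ.apply_eq_of_diag_eq_zero hk g, hφ.apply_eq_of_diag_eq_zero hk h, hvec, hperm]

end IsTropRep

end TropRep

section Wreath

variable {n : ℕ}

def wreathMatrix (x : WreathRSn n) : Matrix (Fin n) (Fin n) Trop := fun i j =>
  if x.right j = i then (Multiplicative.toAdd x.left i : Trop) else ⊥

theorem wreathMatrix_mul (x y : WreathRSn n) :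
    wreathMatrix (x * y) = tropMulMat (wreathMatrix x) (wreathMatrix y) := by
  ext i j
  have hleft : Multiplicative.toAdd (x * y).left i =
      Multiplicative.toAdd x.left i + Multiplicative.toAdd y.left (x.right⁻¹ i) := rfl
  have hright : (x * y).right j = x.right (y.right j) := rfl
  refine le_antisymm ?_ (Finset.sup_le fun k _ => ?_)
  · refine le_trans ?_ (add_le_tropMulMat_apply _ _ i (y.right j) j)
    simp only [wreathMatrix, hleft, hright]
    split_ifs with h
    · subst h; simp
    · exact bot_le
  · simp only [wreathMatrix, hleft, hright]
    split_ifs with h1 h2 h3 <;> subst_vars <;> simp_all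

theorem wreathMatrix_injective : Function.Injective (wreathMatrix (n := n)) := by
  intro x y hxy
  have hright : x.right = y.right := Equiv.ext fun j => by
    have h := congrFun (congrFun hxy (x.right j)) j
    simp only [wreathMatrix, if_true] at h
    split_ifs at h with hj
    exacts [hj.symm, absurd h WithBot.coe_ne_bot]
  have hleft : x.left = y.left := Multiplicative.toAdd.injective <| funext fun i => by
    have h := congrFun (congrFun hxy i) (x.right⁻¹ i)
    simpa [wreathMatrix, hright] using h
  exact SemidirectProduct.ext hleft hright

end Wreath

theorem tropical_rep_iff_embeds_in_wreath {n : ℕ} (G : Type*) [Group G] :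
    (∃ φ : G → Matrix (Fin n) (Fin n) Trop,
        Function.Injective φ ∧
        ∀ g h : G, φ (g * h) = tropMulMat (φ g) (φ h)) ↔
    ∃ ψ : G →* WreathRSn n, Function.Injective ψ := by
  constructor
  · rintro ⟨φ, hinj, hφ⟩
    exact ⟨IsTropRep.toWreath hφ, IsTropRep.toWreath_injective hφ hinj⟩
  · rintro ⟨ψ, hψ⟩
    exact ⟨wreathMatrix ∘ ψ, wreathMatrix_injective.comp hψ,
      fun g h => by simp only [Function.comp_apply, map_mul, wreathMatrix_mul]⟩
end
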